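/- arXiv:1609.00525 — 7 statements merged into one kernel-verified Lean document; each statement's English description precedes it below -/
import Mathlib

section
/- For every positive integer q, the number of pairs (p1,p2) of integers with 0 < p1, p2 ≤ q and gcd(p1,p2,q)=1 equals the sum over divisors a of q of a·φ(a)·φ(q/a). -/
/-!
Split the pairs according to `d = gcd(q, p₂)`, a divisor of `q`. Since `gcd(p₁, p₂, q) = gcd(p₁, d)`,
the pairs with a given `d` form a product: `p₂` ranges over the `φ(q/d)` residues with
`gcd(q, p₂) = d`, and `p₁` over the residues prime to `d`, of which there are `φ(d)` in each of
the `q/d` blocks of length `d`. Summing `(q/d) φ(d) φ(q/d)` over `d ∣ q` and substituting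
`d ↦ q/d` gives the formula.
-/

open Finset Function
open scoped Nat

namespace Nat

theorem filter_Ico_card_eq_mul_count_of_periodic (n a k : ℕ) (p : ℕ → Prop) [DecidablePred p]
    (pp : Periodic p a) : #{x ∈ Ico n (n + a * k) | p x} = k * a.count p := by
  induction k with
  | zero => simp
  | succ k ih =>
    have hsplit : Ico n (n + a * (k + 1)) = Ico n (n + a * k) ∪ Ico (n + a * k) (n + a * k + a) := by
      rw [Ico_union_Ico_eq_Ico (by omega) (by omega), mul_add_one, add_assoc]
    rw [hsplit, filter_union, card_union_of_disjoint
      (disjoint_filter_filter (Ico_disjoint_Ico_consecutive _ _ _)), ih,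
      filter_Ico_card_eq_of_periodic _ _ _ pp]
    ring

theorem card_filter_Icc_coprime_of_dvd {d q : ℕ} (hd : d ∣ q) :
    #{x ∈ Icc 1 q | d.Coprime x} = q / d * φ d := by
  obtain ⟨k, rfl⟩ := hd
  rcases d.eq_zero_or_pos with rfl | hd0
  · simp
  rw [← Ico_add_one_right_eq_Icc, add_comm, filter_Ico_card_eq_mul_count_of_periodic _ _ _ _
    (periodic_coprime d), count_eq_card_filter_range, ← totient_eq_card_coprime,
    Nat.mul_div_cancel_left _ hd0]

theorem card_filter_Icc_gcd_eq_of_dvd {d q : ℕ} (hd : d ∣ q) :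
    #{x ∈ Icc 1 q | q.gcd x = d} = φ (q / d) := by
  have hcount := filter_Ico_card_eq_mul_count_of_periodic 1 q 1 _ ((periodic_gcd q).comp (· = d))
  rw [mul_one, one_mul, add_comm] at hcount
  rw [← Ico_add_one_right_eq_Icc, totient_div_of_dvd hd, ← count_eq_card_filter_range]
  exact hcount

theorem filter_gcd_gcd_eq_one_fiber_eq_product (s t : Finset ℕ) (q d : ℕ) :
    {p ∈ {p ∈ s ×ˢ t | (p.1.gcd p.2).gcd q = 1} | q.gcd p.2 = d}
      = {x ∈ s | d.Coprime x} ×ˢ {y ∈ t | q.gcd y = d} := by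
  ext ⟨x, y⟩
  simp only [mem_filter, mem_product, Nat.gcd_assoc x y q, Nat.gcd_comm y q]
  constructor
  · rintro ⟨⟨⟨hx, hy⟩, hcop⟩, rfl⟩
    exact ⟨⟨hx, Coprime.symm hcop⟩, hy, rfl⟩
  · rintro ⟨⟨hx, hcop⟩, hy, rfl⟩
    exact ⟨⟨⟨hx, hy⟩, Coprime.symm hcop⟩, rfl⟩

end Nat

theorem stmt0 (q : ℕ) (hq : 0 < q) :
    ((Finset.Icc 1 q ×ˢ Finset.Icc 1 q).filter
        (fun p => Nat.gcd (Nat.gcd p.1 p.2) q = 1)).card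
      = ∑ a ∈ q.divisors, a * Nat.totient a * Nat.totient (q / a) := by
  rw [card_eq_sum_card_fiberwise (f := fun p : ℕ × ℕ => q.gcd p.2) (t := q.divisors)
    fun p _ => Nat.mem_divisors.mpr ⟨Nat.gcd_dvd_left q p.2, hq.ne'⟩,
    ← Nat.sum_div_divisors q fun a => a * φ a * φ (q / a)]
  refine sum_congr rfl fun d hd => ?_
  have hdq := Nat.dvd_of_mem_divisors hd
  rw [Nat.filter_gcd_gcd_eq_one_fiber_eq_product, card_product,
    Nat.card_filter_Icc_coprime_of_dvd hdq, Nat.card_filter_Icc_gcd_eq_of_dvd hdq,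
    Nat.div_div_self hdq hq.ne', mul_right_comm]
end

section
/- For every positive integer q, the number of pairs (p1,p2) of integers with 0 < p1, p2 ≤ q and gcd(p1,p2,q)=1 equals φ(q) · Σ_{d | ℓ} μ(d) σ₁(q/d²), where ℓ is the largest positive integer whose square divides q. -/
/-!
Möbius inversion over the common divisors of `p₁`, `p₂` and `q` shows that the count is Jordan's
totient `J₂(q) = ∑_{d ∣ q} μ(d) (q/d)²`. Both `J₂` and `φ ψ`, with `ψ` Dedekind's psi function,
are multiplicative, and on prime powers `p^{2k} (p² - 1) = p^k (p - 1) · p^k (p + 1)`. Finally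
`ψ = μ(√·) ∗ σ₁`, and the `d` with `d² ∣ q` are exactly the divisors of `ℓ`, so `ψ(q)` is the sum
in the theorem.
-/

open ArithmeticFunction Finset
open scoped ArithmeticFunction.Moebius ArithmeticFunction.sigma

theorem Nat.Coprime.isSquare_of_isSquare_mul {m n : ℕ} (h : m.Coprime n)
    (hmn : IsSquare (m * n)) : IsSquare m := by
  obtain ⟨r, hr⟩ := hmn
  obtain ⟨d, rfl⟩ := exists_eq_pow_of_mul_eq_pow (Nat.isUnit_iff.mpr h.gcd_eq_one)
    (hr.trans (sq r).symm)
  exact IsSquare.sq d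

namespace ArithmeticFunction

theorem mul_apply_prime_pow {R : Type*} [Semiring R] (f g : ArithmeticFunction R) {p : ℕ}
    (hp : p.Prime) (m : ℕ) :
    (f * g) (p ^ m) = ∑ i ∈ range (m + 1), f (p ^ i) * g (p ^ (m - i)) := by
  rw [mul_apply, Nat.sum_divisorsAntidiagonal (f · * g ·), Nat.sum_divisors_prime_pow hp]
  refine sum_congr rfl fun i hi => ?_
  rw [Nat.pow_div (Nat.lt_succ_iff.mp (mem_range.mp hi)) hp.pos]

theorem mul_apply_prime_pow_eq_sub {R : Type*} [Ring R] {f : ArithmeticFunction R}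
    (g : ArithmeticFunction R) {p j : ℕ} (hp : p.Prime)
    (hf : ∀ i, f (p ^ i) = (if i = 0 then 1 else 0) - if i = j then 1 else 0) (m : ℕ) :
    (f * g) (p ^ m) = g (p ^ m) - if j ≤ m then g (p ^ (m - j)) else 0 := by
  simp only [mul_apply_prime_pow f g hp, hf, sub_mul, sum_sub_distrib, ite_mul, one_mul, zero_mul,
    sum_ite_eq', mem_range, Nat.lt_succ_iff, zero_le, if_true, Nat.sub_zero]

theorem moebius_apply_prime_pow_eq_sub {p : ℕ} (hp : p.Prime) (i : ℕ) :
    μ (p ^ i) = (if i = 0 then 1 else 0) - if i = 1 then 1 else 0 := by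
  rcases eq_or_ne i 0 with rfl | hi
  · simp
  · rw [moebius_apply_prime_pow hp hi]
    split_ifs <;> simp_all

theorem moebius_mul_pow_two_apply_prime_pow {p : ℕ} (hp : p.Prime) (k : ℕ) :
    (μ * ↑(pow 2) : ArithmeticFunction ℤ) (p ^ (k + 1)) =
      ((p : ℤ) ^ (k + 1)) ^ 2 - ((p : ℤ) ^ k) ^ 2 := by
  rw [mul_apply_prime_pow_eq_sub _ hp (moebius_apply_prime_pow_eq_sub hp), if_pos (by omega)]
  simp [natCoe_apply, pow_apply]

def moebiusSqrt : ArithmeticFunction ℤ :=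
  ⟨fun n => if IsSquare n then μ n.sqrt else 0, by simp⟩

theorem moebiusSqrt_apply (n : ℕ) : moebiusSqrt n = if IsSquare n then μ n.sqrt else 0 := rfl

@[simp]
theorem moebiusSqrt_apply_sq (d : ℕ) : moebiusSqrt (d ^ 2) = μ d := by
  rw [moebiusSqrt_apply, if_pos (IsSquare.sq d), Nat.sqrt_eq']

theorem moebiusSqrt_apply_of_not_isSquare {n : ℕ} (h : ¬IsSquare n) : moebiusSqrt n = 0 := by
  rw [moebiusSqrt_apply, if_neg h]

theorem isMultiplicative_moebiusSqrt : moebiusSqrt.IsMultiplicative := by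
  refine ⟨by simpa using moebiusSqrt_apply_sq 1, fun {m n} hmn => ?_⟩
  by_cases hm : IsSquare m
  · by_cases hn : IsSquare n
    · obtain ⟨a, rfl⟩ := hm
      obtain ⟨b, rfl⟩ := hn
      rw [← sq, ← sq, ← mul_pow, moebiusSqrt_apply_sq, moebiusSqrt_apply_sq, moebiusSqrt_apply_sq,
        isMultiplicative_moebius.map_mul_of_coprime]
      exact Nat.Coprime.coprime_dvd_left (dvd_pow_self a two_ne_zero)
        (Nat.Coprime.coprime_dvd_right (dvd_pow_self b two_ne_zero) (by simpa [sq] using hmn))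
    · rw [moebiusSqrt_apply_of_not_isSquare hn, mul_zero, moebiusSqrt_apply_of_not_isSquare]
      exact fun h => hn (Nat.Coprime.isSquare_of_isSquare_mul hmn.symm (mul_comm m n ▸ h))
  · rw [moebiusSqrt_apply_of_not_isSquare hm, zero_mul, moebiusSqrt_apply_of_not_isSquare]
    exact fun h => hm (Nat.Coprime.isSquare_of_isSquare_mul hmn h)

theorem moebiusSqrt_apply_prime_pow {p : ℕ} (hp : p.Prime) (i : ℕ) :
    moebiusSqrt (p ^ i) = (if i = 0 then 1 else 0) - if i = 2 then 1 else 0 := by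
  rcases Nat.even_or_odd' i with ⟨j, rfl | rfl⟩
  · rw [pow_mul', moebiusSqrt_apply_sq, moebius_apply_prime_pow_eq_sub hp]
    simp
  · rw [moebiusSqrt_apply_of_not_isSquare, if_neg (by omega), if_neg (by omega), sub_zero]
    rintro ⟨r, hr⟩
    have hfact : Fact p.Prime := ⟨hp⟩
    have hval := congrArg (padicValNat p) hr
    rw [padicValNat.prime_pow, padicValNat.mul] at hval
    · omega
    all_goals rintro rfl; simp [hp.ne_zero] at hr

def totient : ArithmeticFunction ℕ := ⟨Nat.totient, Nat.totient_zero⟩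

theorem totient_apply (n : ℕ) : totient n = n.totient := rfl

theorem isMultiplicative_totient : totient.IsMultiplicative :=
  ⟨Nat.totient_one, fun h => Nat.totient_mul h⟩

/-- Dedekind's `ψ(n) = n ∏_{p ∣ n} (1 + 1/p)`. -/
noncomputable def dedekindPsi : ArithmeticFunction ℤ := moebiusSqrt * ↑(σ 1)

theorem isMultiplicative_dedekindPsi : dedekindPsi.IsMultiplicative :=
  isMultiplicative_moebiusSqrt.mul isMultiplicative_sigma.natCast

theorem dedekindPsi_apply_prime_pow {p : ℕ} (hp : p.Prime) (k : ℕ) :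
    dedekindPsi (p ^ (k + 1)) = (p : ℤ) ^ k * (p + 1) := by
  rw [dedekindPsi, mul_apply_prime_pow_eq_sub _ hp (moebiusSqrt_apply_prime_pow hp)]
  simp only [natCoe_apply, sigma_one_apply_prime_pow hp, Nat.cast_sum, Nat.cast_pow]
  rcases k with _ | k
  · simp [sum_range_succ, add_comm]
  · rw [if_pos (by omega), show k + 1 + 1 - 2 = k by omega, sum_range_succ, sum_range_succ]
    ring

theorem moebius_mul_pow_two_eq_totient_pmul_dedekindPsi :
    (μ * ↑(pow 2) : ArithmeticFunction ℤ) =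
      (↑totient : ArithmeticFunction ℤ).pmul dedekindPsi := by
  refine (IsMultiplicative.eq_iff_eq_on_prime_powers _
    (isMultiplicative_moebius.mul isMultiplicative_pow.natCast) _
    (isMultiplicative_totient.natCast.pmul isMultiplicative_dedekindPsi)).mpr fun p i hp => ?_
  rcases i with _ | k
  · simp [totient_apply, isMultiplicative_dedekindPsi.map_one]
  · rw [moebius_mul_pow_two_apply_prime_pow hp, pmul_apply, dedekindPsi_apply_prime_pow hp,
      natCoe_apply, totient_apply, Nat.totient_prime_pow_succ hp, Nat.cast_mul,
      Nat.cast_sub hp.one_le]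
    push_cast
    ring

theorem dedekindPsi_apply {n : ℕ} (hn : n ≠ 0) :
    dedekindPsi n = ∑ d ∈ n.divisors with d ^ 2 ∣ n, μ d * σ 1 (n / d ^ 2) := by
  calc dedekindPsi n = ∑ m ∈ n.divisors, moebiusSqrt m * σ 1 (n / m) := by
        rw [dedekindPsi, mul_apply, Nat.sum_divisorsAntidiagonal fun a b =>
          moebiusSqrt a * (↑(σ 1) : ArithmeticFunction ℤ) b]
        simp only [natCoe_apply]
    _ = ∑ m ∈ {d ∈ n.divisors | d ^ 2 ∣ n}.image (· ^ 2), moebiusSqrt m * σ 1 (n / m) := by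
        refine (sum_subset (fun m hm => ?_) fun m hm hmim => ?_).symm
        · obtain ⟨d, hd, rfl⟩ := mem_image.mp hm
          exact Nat.mem_divisors.mpr ⟨(mem_filter.mp hd).2, hn⟩
        · rw [moebiusSqrt_apply_of_not_isSquare, zero_mul]
          rintro ⟨d, rfl⟩
          refine hmim (mem_image.mpr ⟨d, mem_filter.mpr ⟨?_, ?_⟩, sq d⟩)
          · exact Nat.mem_divisors.mpr
              ⟨(Dvd.intro d rfl).trans (Nat.dvd_of_mem_divisors hm), hn⟩
          · exact (sq d).symm ▸ Nat.dvd_of_mem_divisors hm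
    _ = ∑ d ∈ n.divisors with d ^ 2 ∣ n, μ d * σ 1 (n / d ^ 2) := by
        rw [sum_image (Nat.pow_left_injective two_ne_zero).injOn]
        simp only [moebiusSqrt_apply_sq]

end ArithmeticFunction

theorem Nat.divisors_gcd_eq_filter (a : ℕ) {n : ℕ} (hn : n ≠ 0) :
    (a.gcd n).divisors = {d ∈ n.divisors | d ∣ a} := by
  ext d
  simp [Nat.dvd_gcd_iff, hn, and_comm]

theorem card_filter_gcd_gcd_eq_one {q : ℕ} (hq : q ≠ 0) :
    (#{p ∈ Icc 1 q ×ˢ Icc 1 q | (p.1.gcd p.2).gcd q = 1} : ℤ) = (μ * ↑(pow 2)) q := by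
  have indicator (a b : ℕ) : (if (a.gcd b).gcd q = 1 then 1 else 0 : ℤ) =
      ∑ d ∈ q.divisors, if d ∣ a ∧ d ∣ b then μ d else 0 := by
    rw [← one_apply (R := ℤ), ← moebius_mul_coe_zeta, coe_mul_zeta_apply,
      Nat.divisors_gcd_eq_filter _ hq, sum_filter]
    simp only [Nat.dvd_gcd_iff]
  have multiples (d : ℕ) : #{x ∈ Icc 1 q | d ∣ x} = q / d := by
    rw [← Nat.Ioc_filter_dvd_card_eq_div, ← Icc_add_one_left_eq_Ioc, zero_add]
  calc (#{p ∈ Icc 1 q ×ˢ Icc 1 q | (p.1.gcd p.2).gcd q = 1} : ℤ)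
      = ∑ d ∈ q.divisors, ∑ p ∈ Icc 1 q ×ˢ Icc 1 q, if d ∣ p.1 ∧ d ∣ p.2 then μ d else 0 := by
        rw [card_filter, Nat.cast_sum, sum_comm]
        exact sum_congr rfl fun p _ => by rw [← indicator]; split_ifs <;> rfl
    _ = ∑ d ∈ q.divisors, μ d * (q / d : ℕ) ^ 2 := by
        refine sum_congr rfl fun d _ => ?_
        rw [← sum_filter, filter_product, sum_const, card_product, multiples, nsmul_eq_mul]
        push_cast
        ring
    _ = (μ * ↑(pow 2)) q := by
        rw [mul_apply, Nat.sum_divisorsAntidiagonal fun a b =>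
          μ a * (↑(pow 2) : ArithmeticFunction ℤ) b]
        simp [natCoe_apply, pow_apply]

theorem Nat.divisors_eq_filter_sq_dvd {q ℓ : ℕ} (hq : q ≠ 0) (hℓ : ℓ ^ 2 ∣ q)
    (hmax : ∀ l : ℕ, 0 < l → l ^ 2 ∣ q → l ≤ ℓ) :
    ℓ.divisors = {d ∈ q.divisors | d ^ 2 ∣ q} := by
  have hℓ0 : ℓ ≠ 0 := by
    rintro rfl
    exact hq (zero_dvd_iff.mp (by simpa using hℓ))
  ext d
  simp only [Nat.mem_divisors, mem_filter]
  constructor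
  · rintro ⟨hdℓ, -⟩
    have hd2 : d ^ 2 ∣ q := (pow_dvd_pow_of_dvd hdℓ 2).trans hℓ
    exact ⟨⟨(dvd_pow_self d two_ne_zero).trans hd2, hq⟩, hd2⟩
  · rintro ⟨⟨hdq, -⟩, hd2⟩
    have hlcm_pos : 0 < d.lcm ℓ :=
      Nat.lcm_pos (Nat.pos_of_dvd_of_pos hdq (Nat.pos_of_ne_zero hq)) (Nat.pos_of_ne_zero hℓ0)
    have hlcm : d.lcm ℓ = ℓ := by
      refine le_antisymm (hmax _ hlcm_pos ?_) (Nat.le_of_dvd hlcm_pos (Nat.dvd_lcm_right d ℓ))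
      rw [← Nat.pow_lcm_pow]
      exact Nat.lcm_dvd hd2 hℓ
    exact ⟨hlcm ▸ Nat.dvd_lcm_left d ℓ, hℓ0⟩

theorem stmt2_general (q : ℕ) (hq : 0 < q) (ℓ : ℕ) (hℓ : ℓ ^ 2 ∣ q)
    (hmax : ∀ l : ℕ, 0 < l → l ^ 2 ∣ q → l ≤ ℓ) :
    (((Finset.Icc 1 q ×ˢ Finset.Icc 1 q).filter
        (fun p => Nat.gcd (Nat.gcd p.1 p.2) q = 1)).card : ℤ)
      = (Nat.totient q : ℤ) *
        ∑ d ∈ ℓ.divisors, μ d * (∑ e ∈ (q / d ^ 2).divisors, (e : ℤ)) := by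
  rw [card_filter_gcd_gcd_eq_one hq.ne', moebius_mul_pow_two_eq_totient_pmul_dedekindPsi,
    pmul_apply, natCoe_apply, totient_apply, dedekindPsi_apply hq.ne',
    Nat.divisors_eq_filter_sq_dvd hq.ne' hℓ hmax]
  simp only [sigma_one_apply, Nat.cast_sum]

theorem stmt2 (q : ℕ) (hq : 0 < q) (ℓ : ℕ) (hℓpos : 0 < ℓ) (hℓ : ℓ ^ 2 ∣ q)
    (hmax : ∀ l : ℕ, 0 < l → l ^ 2 ∣ q → l ≤ ℓ) :
    (((Finset.Icc 1 q ×ˢ Finset.Icc 1 q).filter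
        (fun p => Nat.gcd (Nat.gcd p.1 p.2) q = 1)).card : ℤ)
      = (Nat.totient q : ℤ) *
        ∑ d ∈ ℓ.divisors, μ d * (∑ e ∈ (q / d ^ 2).divisors, (e : ℤ)) :=
  stmt2_general q hq ℓ hℓ hmax
end

section
/- For every positive integer q, the number of pairs (p1,p2) of integers with 0 < p1, p2 ≤ q and gcd(p1,p2,q)=1 is strictly greater than (6/π²)·q². -/
/-!
A pair is counted exactly when no divisor `d > 1` of `q` divides both coordinates, so Möbius
inversion over the divisors of `q` gives the count `∑_{d ∣ q} μ(d) (q/d)² = q² ∏_{p ∣ q} (1 - p⁻²)`.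
By the Euler product, `∏_{p ∣ q} (1 - p⁻²)⁻¹` is the sum of `n⁻²` over the `n` all of whose prime
factors divide `q`; this sum omits every prime not dividing `q`, so it is strictly smaller than
`ζ(2) = π²/6`.
-/

open Real Finset ArithmeticFunction
open UniqueFactorizationMonoid
open scoped ArithmeticFunction.Moebius ArithmeticFunction.zeta

namespace ArithmeticFunction

theorem IsMultiplicative.sum_divisors_moebius_mul {R : Type*} [CommRing R]
    {f : ArithmeticFunction R} (hf : f.IsMultiplicative) {n : ℕ} (hn : n ≠ 0) :
    ∑ d ∈ n.divisors, μ d * f d = ∏ p ∈ n.primeFactors, (1 - f p) := by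
  rw [← Nat.primeFactors_radical, hf.prodPrimeFactors_one_sub_of_squarefree _ squarefree_radical]
  refine (sum_subset (Nat.divisors_subset_of_dvd hn radical_dvd_self) fun d hd hdr => ?_).symm
  have hd : ¬ Squarefree d := fun hsq => hdr <| Nat.mem_divisors.2
    ⟨(dvd_radical_iff hsq.isRadical hn).2 (Nat.dvd_of_mem_divisors hd), radical_ne_zero⟩
  simp [moebius_eq_zero_of_not_squarefree hd]

theorem sum_divisors_moebius (n : ℕ) : ∑ d ∈ n.divisors, μ d = if n = 1 then 1 else 0 := by
  rw [← coe_mul_zeta_apply, moebius_mul_coe_zeta, one_apply]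

noncomputable def invSq : ArithmeticFunction ℝ := ⟨fun n => ((n : ℝ) ^ 2)⁻¹, by simp⟩

theorem invSq_apply (n : ℕ) : invSq n = ((n : ℝ) ^ 2)⁻¹ := rfl

theorem isMultiplicative_invSq : invSq.IsMultiplicative :=
  ⟨by simp [invSq_apply], fun _ => by simp only [invSq_apply]; push_cast; rw [mul_pow, mul_inv]⟩

end ArithmeticFunction

theorem card_filter_gcd_eq_one_eq_sum_moebius (N : ℕ) {q : ℕ} (hq : q ≠ 0) :
    (#{p ∈ Icc 1 N ×ˢ Icc 1 N | Nat.gcd (Nat.gcd p.1 p.2) q = 1} : ℤ)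
      = ∑ d ∈ q.divisors, μ d * ((N / d : ℕ) : ℤ) ^ 2 := by
  have hdivisors (a b : ℕ) :
      (Nat.gcd (Nat.gcd a b) q).divisors = {d ∈ q.divisors | d ∣ a ∧ d ∣ b} := by
    ext d
    simp only [Nat.mem_divisors, mem_filter, Nat.dvd_gcd_iff, ne_eq, Nat.gcd_eq_zero_iff, hq]
    tauto
  have hmultiples (d : ℕ) : #{x ∈ Icc 1 N | d ∣ x} = N / d := Nat.Ioc_filter_dvd_card_eq_div N d
  calc (#{p ∈ Icc 1 N ×ˢ Icc 1 N | Nat.gcd (Nat.gcd p.1 p.2) q = 1} : ℤ)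
      = ∑ p ∈ Icc 1 N ×ˢ Icc 1 N, ∑ d ∈ (Nat.gcd (Nat.gcd p.1 p.2) q).divisors, μ d := by
        simp only [sum_divisors_moebius, sum_boole]
    _ = ∑ d ∈ q.divisors, ∑ p ∈ Icc 1 N ×ˢ Icc 1 N, if d ∣ p.1 ∧ d ∣ p.2 then μ d else 0 := by
        simp only [hdivisors, sum_filter]
        exact sum_comm
    _ = ∑ d ∈ q.divisors, μ d * ((N / d : ℕ) : ℤ) ^ 2 := by
        refine sum_congr rfl fun d _ => ?_
        rw [← sum_filter, sum_const, filter_product (d ∣ ·) (d ∣ ·), card_product, hmultiples]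
        simp [sq, mul_comm]

theorem card_filter_gcd_eq_one_eq_sq_mul_prod {q : ℕ} (hq : q ≠ 0) :
    (#{p ∈ Icc 1 q ×ˢ Icc 1 q | Nat.gcd (Nat.gcd p.1 p.2) q = 1} : ℝ)
      = (q : ℝ) ^ 2 * ∏ p ∈ q.primeFactors, (1 - ((p : ℝ) ^ 2)⁻¹) := by
  have hcount : (#{p ∈ Icc 1 q ×ˢ Icc 1 q | Nat.gcd (Nat.gcd p.1 p.2) q = 1} : ℝ)
      = ∑ d ∈ q.divisors, (μ d : ℝ) * ((q / d : ℕ) : ℝ) ^ 2 := by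
    rw [← Int.cast_natCast, card_filter_gcd_eq_one_eq_sum_moebius q hq]
    push_cast [Int.cast_sum, Int.cast_mul, Int.cast_pow, Int.cast_natCast]
    rfl
  simp only [hcount, ← invSq_apply]
  rw [← isMultiplicative_invSq.sum_divisors_moebius_mul hq, mul_sum]
  refine sum_congr rfl fun d hd => ?_
  have hd0 : (d : ℝ) ≠ 0 := Nat.cast_ne_zero.2 (Nat.pos_of_mem_divisors hd).ne'
  rw [Nat.cast_div (Nat.dvd_of_mem_divisors hd) hd0, invSq_apply]
  field_simp

theorem tsum_factoredNumbers_inv_sq_lt (s : Finset ℕ) :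
    ∑' m : Nat.factoredNumbers s, ((m : ℝ) ^ 2)⁻¹ < π ^ 2 / 6 := by
  have hsum : Summable fun n : ℕ => ((n : ℝ) ^ 2)⁻¹ :=
    Real.summable_nat_pow_inv.2 one_lt_two
  obtain ⟨P, hP, hPs⟩ := (Nat.infinite_setOfPred_prime.sdiff s.finite_toSet).nonempty
  have hP_notMem : P ∉ Nat.factoredNumbers s :=
    fun h => hPs (Nat.mem_factoredNumbers'.1 h P hP dvd_rfl)
  rw [← hasSum_zeta_two.tsum_eq, _root_.tsum_subtype _ fun n : ℕ => ((n : ℝ) ^ 2)⁻¹]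
  simp only [one_div]
  refine (hsum.indicator _).tsum_lt_tsum (i := P) (fun n => ?_) ?_ hsum
  · exact Set.indicator_le_self' (fun _ _ => by positivity) n
  · rw [Set.indicator_of_notMem hP_notMem]
    have : (0 : ℝ) < P := by exact_mod_cast hP.pos
    positivity

theorem div_pi_sq_lt_prod_one_sub_inv_sq {s : Finset ℕ} (hs : ∀ p ∈ s, p.Prime) :
    6 / π ^ 2 < ∏ p ∈ s, (1 - ((p : ℝ) ^ 2)⁻¹) := by
  let f : ℕ →* ℝ := invMonoidHom.comp ((powMonoidHom 2).comp (Nat.castRingHom ℝ : ℕ →* ℝ))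
  have heuler :
      ∏ p ∈ s, (1 - ((p : ℝ) ^ 2)⁻¹)⁻¹ = ∑' m : Nat.factoredNumbers s, ((m : ℝ) ^ 2)⁻¹ := by
    have := EulerProduct.prod_filter_prime_geometric_eq_tsum_factoredNumbers (f := f)
      (Real.summable_nat_pow_inv.2 one_lt_two) s
    rwa [filter_true_of_mem hs] at this
  have hfactor_pos (p) (hp : p ∈ s) : 0 < 1 - ((p : ℝ) ^ 2)⁻¹ := by
    have : (1 : ℝ) < p := by exact_mod_cast (hs p hp).one_lt
    linarith [inv_lt_one_of_one_lt₀ (one_lt_pow₀ this two_ne_zero)]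
  calc 6 / π ^ 2 = (π ^ 2 / 6)⁻¹ := (inv_div _ _).symm
    _ < (∏ p ∈ s, (1 - ((p : ℝ) ^ 2)⁻¹)⁻¹)⁻¹ := by
        refine inv_strictAnti₀ (prod_pos fun p hp => inv_pos.2 (hfactor_pos p hp)) ?_
        exact heuler ▸ tsum_factoredNumbers_inv_sq_lt s
    _ = ∏ p ∈ s, (1 - ((p : ℝ) ^ 2)⁻¹) := by rw [prod_inv_distrib, inv_inv]

theorem stmt3 (q : ℕ) (hq : 0 < q) :
    (6 / π ^ 2) * (q : ℝ) ^ 2 <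
      (((Finset.Icc 1 q ×ˢ Finset.Icc 1 q).filter
          (fun p => Nat.gcd (Nat.gcd p.1 p.2) q = 1)).card : ℝ) := by
  rw [card_filter_gcd_eq_one_eq_sq_mul_prod hq.ne', mul_comm ((q : ℝ) ^ 2)]
  have hprod : 6 / π ^ 2 < ∏ p ∈ q.primeFactors, (1 - ((p : ℝ) ^ 2)⁻¹) :=
    div_pi_sq_lt_prod_one_sub_inv_sq fun _ => Nat.prime_of_mem_primeFactors
  exact mul_lt_mul_of_pos_right hprod (by positivity)
end

section
/- For coprime positive integers q0 and q1 with q0·q1 = q, and integers ℓ0, ℓ1 satisfying q0ℓ0 + q1ℓ1 = 1, and for any divisor a of q0, integers n1, n2, b with b invertible mod q0/a: the double sum over c1 invertible mod q1 and c2 invertible mod q0 of e((n1(c1 q0 ℓ0 + c2 b̄ q1 ℓ1)a + n2(b c1 q0 ℓ0 + c2 q1 ℓ1))/q) equals c_{q1}(n1 a + n2 b) · c_{q0}(n1 b̄ a + n2), where c_r(n) denotes the Ramanujan sum and b̄ is an inverse of b mod q0/a. -/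
open Real

noncomputable def eChar (x : ℝ) : ℂ := Complex.exp (2 * π * Complex.I * x)

/-- Ramanujan sum `c_r(n) = ∑_{α mod r, gcd(α,r)=1} e(nα/r)`. -/
noncomputable def ramanujanSum (r : ℕ) (n : ℤ) : ℂ :=
  ∑ α ∈ (Finset.range r).filter (fun α => Nat.Coprime α r),
    eChar (((n * α : ℤ) : ℝ) / r)

/-!
By the Bezout relation the phase splits exactly:
`N / (q0 q1) = (n1 a + n2 b) ℓ0 c1 / q1 + (n1 b̄ a + n2) ℓ1 c2 / q0`, so the double sum is a
product of two single sums. Since `q0 ℓ0 ≡ 1 (mod q1)` and `q1 ℓ1 ≡ 1 (mod q0)`, multiplying the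
summation variable by `ℓ0` (resp. `ℓ1`) permutes the reduced residues, and each factor is the
corresponding Ramanujan sum.
-/

lemma eChar_add (x y : ℝ) : eChar (x + y) = eChar x * eChar y := by
  rw [eChar, eChar, eChar, Complex.ofReal_add, mul_add, Complex.exp_add]

lemma eChar_intCast (k : ℤ) : eChar k = 1 := by
  rw [eChar, ← Complex.exp_int_mul_two_pi_mul_I k]
  congr 1
  push_cast
  ring

lemma eChar_intCast_div_congr {r : ℕ} {m m' : ℤ} (h : (m : ZMod r) = m') :
    eChar ((m : ℝ) / r) = eChar ((m' : ℝ) / r) := by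
  obtain ⟨k, hk⟩ := (ZMod.intCast_eq_intCast_iff_dvd_sub m m' r).mp h
  obtain rfl : m' = m + r * k := by linarith
  rcases eq_or_ne r 0 with rfl | hr
  · simp
  have hshift : ((m + r * k : ℤ) : ℝ) / r = m / r + k := by
    push_cast
    field_simp
  rw [hshift, eChar_add, eChar_intCast, mul_one]

lemma ZMod.isUnit_intCast_of_mul_add_mul_eq_one {n : ℕ} {x y z : ℤ} (h : x * y + n * z = 1) :
    IsUnit (y : ZMod n) := by
  have h' := congrArg (Int.cast : ℤ → ZMod n) h
  push_cast at h'
  rw [ZMod.natCast_self, zero_mul, add_zero] at h'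
  exact .of_mul_eq_one_right _ h'

lemma Nat.coprime_val_mul_of_isUnit {r : ℕ} [NeZero r] {u : ZMod r} (hu : IsUnit u) {α : ℕ}
    (hα : α.Coprime r) : (u * α).val.Coprime r := by
  rw [← ZMod.isUnit_iff_coprime, ZMod.natCast_val, ZMod.cast_id]
  exact hu.mul ((ZMod.isUnit_iff_coprime α r).mpr hα)

/-- `α ↦ uα` permutes the reduced residues modulo `r`. -/
lemma ramanujanSum_mul_of_isUnit {r : ℕ} (n u : ℤ) (hu : IsUnit (u : ZMod r)) :
    ramanujanSum r (n * u) = ramanujanSum r n := by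
  rcases Nat.eq_zero_or_pos r with rfl | hr
  · simp [ramanujanSum]
  have : NeZero r := ⟨hr.ne'⟩
  obtain ⟨v, hvu⟩ := hu.exists_left_inv
  have hv : IsUnit v := .of_mul_eq_one _ hvu
  have huv : (u : ZMod r) * v = 1 := by rw [mul_comm, hvu]
  refine Finset.sum_nbij' (fun α => ((u : ZMod r) * α).val) (fun β => (v * β).val)
    ?_ ?_ ?_ ?_ ?_
  all_goals simp only [Finset.mem_filter, Finset.mem_range]
  · exact fun α hα => ⟨ZMod.val_lt _, Nat.coprime_val_mul_of_isUnit hu hα.2⟩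
  · exact fun β hβ => ⟨ZMod.val_lt _, Nat.coprime_val_mul_of_isUnit hv hβ.2⟩
  · intro α hα
    rw [ZMod.natCast_val, ZMod.cast_id, ← mul_assoc, hvu, one_mul, ZMod.val_natCast_of_lt hα.1]
  · intro β hβ
    rw [ZMod.natCast_val, ZMod.cast_id, ← mul_assoc, huv, one_mul, ZMod.val_natCast_of_lt hβ.1]
  · intro α _
    apply eChar_intCast_div_congr
    push_cast
    rw [ZMod.natCast_val, ZMod.cast_id]
    ring

theorem stmt8_general (q q0 q1 a : ℕ)
    (hq : q = q0 * q1)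
    (ℓ0 ℓ1 : ℤ) (hbezout : (q0 : ℤ) * ℓ0 + (q1 : ℤ) * ℓ1 = 1)
    (n1 n2 b bbar : ℤ) :
    (∑ c1 ∈ (Finset.range q1).filter (fun c1 => Nat.Coprime c1 q1),
      ∑ c2 ∈ (Finset.range q0).filter (fun c2 => Nat.Coprime c2 q0),
        eChar ((((n1 * ((c1 : ℤ) * q0 * ℓ0 + (c2 : ℤ) * bbar * q1 * ℓ1) * a
            + n2 * (b * (c1 : ℤ) * q0 * ℓ0 + (c2 : ℤ) * q1 * ℓ1)) : ℤ) : ℝ) / q))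
      = ramanujanSum q1 (n1 * a + n2 * b) * ramanujanSum q0 (n1 * bbar * a + n2) := by
  subst hq
  have hsplit : ∀ c1 ∈ (Finset.range q1).filter (fun c1 => Nat.Coprime c1 q1),
      ∀ c2 ∈ (Finset.range q0).filter (fun c2 => Nat.Coprime c2 q0),
      eChar ((((n1 * ((c1 : ℤ) * q0 * ℓ0 + (c2 : ℤ) * bbar * q1 * ℓ1) * a
            + n2 * (b * (c1 : ℤ) * q0 * ℓ0 + (c2 : ℤ) * q1 * ℓ1)) : ℤ) : ℝ) / (q0 * q1 : ℕ))
        = eChar ((((n1 * a + n2 * b) * ℓ0 * c1 : ℤ) : ℝ) / q1)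
          * eChar ((((n1 * bbar * a + n2) * ℓ1 * c2 : ℤ) : ℝ) / q0) := by
    intro c1 hc1 c2 hc2
    have hq1 : (q1 : ℝ) ≠ 0 :=
      Nat.cast_ne_zero.mpr (Finset.mem_range.mp (Finset.mem_filter.mp hc1).1).ne_zero
    have hq0 : (q0 : ℝ) ≠ 0 :=
      Nat.cast_ne_zero.mpr (Finset.mem_range.mp (Finset.mem_filter.mp hc2).1).ne_zero
    rw [← eChar_add]
    congr 1
    push_cast
    field_simp
    ring
  rw [Finset.sum_congr rfl fun c1 hc1 => Finset.sum_congr rfl (hsplit c1 hc1),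
    ← Finset.sum_mul_sum]
  have hℓ0 : IsUnit (ℓ0 : ZMod q1) := ZMod.isUnit_intCast_of_mul_add_mul_eq_one hbezout
  have hℓ1 : IsUnit (ℓ1 : ZMod q0) :=
    ZMod.isUnit_intCast_of_mul_add_mul_eq_one ((add_comm _ _).trans hbezout)
  exact congr_arg₂ (· * ·) (ramanujanSum_mul_of_isUnit _ _ hℓ0)
    (ramanujanSum_mul_of_isUnit _ _ hℓ1)

theorem stmt8 (q q0 q1 a : ℕ) (hq0 : 0 < q0) (hq1 : 0 < q1)
    (hcop : Nat.Coprime q0 q1) (hq : q = q0 * q1)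
    (ℓ0 ℓ1 : ℤ) (hbezout : (q0 : ℤ) * ℓ0 + (q1 : ℤ) * ℓ1 = 1)
    (ha : a ∣ q0) (hapos : 0 < a)
    (hrad : ∀ p : ℕ, p.Prime → p ∣ q0 → p ∣ a)
    (n1 n2 b bbar : ℤ) (hb : b * bbar ≡ 1 [ZMOD ((q0 / a : ℕ) : ℤ)]) :
    (∑ c1 ∈ (Finset.range q1).filter (fun c1 => Nat.Coprime c1 q1),
      ∑ c2 ∈ (Finset.range q0).filter (fun c2 => Nat.Coprime c2 q0),
        eChar ((((n1 * ((c1 : ℤ) * q0 * ℓ0 + (c2 : ℤ) * bbar * q1 * ℓ1) * a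
            + n2 * (b * (c1 : ℤ) * q0 * ℓ0 + (c2 : ℤ) * q1 * ℓ1)) : ℤ) : ℝ) / q))
      = ramanujanSum q1 (n1 * a + n2 * b) * ramanujanSum q0 (n1 * bbar * a + n2) :=
  stmt8_general q q0 q1 a hq ℓ0 ℓ1 hbezout n1 n2 b bbar
end

section
/- Let q be a positive integer, a | q, and n1, n2 integers with n2 ≠ 0. Then Σ_{0 ≤ b < q/a} gcd(n1·a + n2·b, q/a) ≤ |n2| · (q/a) · σ₀(q/a), where σ₀ denotes the number-of-divisors function. -/
/-!
Group the terms by the value `d = gcd(c + n b, m)`, a divisor of `m`. If `d` divides both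
`c + n b` and `c + n b'`, then `d ∣ n (b' - b)`, so `b ≡ b'` modulo `k = d / gcd(d, n)`.
At most `m / k` of the `b < m` lie in one residue class mod `k`, so the terms with value `d`
contribute at most `d · m / k = gcd(d, n) · m ≤ |n| · m`; summing over the divisors `d` of `m`
gives the bound.
-/

open Finset

theorem Finset.card_le_div_of_pairwise_modEq {s : Finset ℕ} {m k : ℕ} (hs : s ⊆ range m)
    (hk : k ∣ m) (hmod : ∀ x ∈ s, ∀ y ∈ s, x ≡ y [MOD k]) : #s ≤ m / k := by
  simpa using card_le_card_of_injOn (t := range (m / k)) (· / k)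
    (fun x hx => mem_range.2 <| Nat.div_lt_div_of_lt_of_dvd hk <| mem_range.1 <| hs hx)
    (fun x hx y hy hxy => by
      rw [← Nat.mod_add_div x k, ← Nat.mod_add_div y k, hmod x hx y hy, show x / k = y / k from hxy])

theorem Int.modEq_div_gcd_of_dvd_add_mul {d : ℕ} (hd : 0 < d) {c n : ℤ} {x y : ℕ}
    (hx : (d : ℤ) ∣ c + n * x) (hy : (d : ℤ) ∣ c + n * y) :
    x ≡ y [MOD d / Int.gcd d n] := by
  have hxy : n * x ≡ n * y [ZMOD d] :=
    Int.ModEq.add_left_cancel' c <| (Int.modEq_zero_iff_dvd.2 hx).trans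
      (Int.modEq_zero_iff_dvd.2 hy).symm
  have := Int.ModEq.cancel_left_div_gcd (by exact_mod_cast hd) hxy
  rw [← Int.natCast_modEq_iff]
  exact_mod_cast this

theorem card_filter_dvd_add_mul_mul_le_gcd_mul {m d : ℕ} (hdm : d ∣ m) (hd : 0 < d) (c n : ℤ) :
    #{b ∈ range m | (d : ℤ) ∣ c + n * (b : ℕ)} * d ≤ Int.gcd d n * m := by
  set k := d / Int.gcd d n
  have hgd : Int.gcd d n ∣ d := by exact_mod_cast Int.gcd_dvd_left (d : ℤ) n
  have hkd : k ∣ d := Nat.div_dvd_of_dvd hgd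
  have hcard : #{b ∈ range m | (d : ℤ) ∣ c + n * (b : ℕ)} ≤ m / k :=
    card_le_div_of_pairwise_modEq (filter_subset _ _) (hkd.trans hdm) fun x hx y hy =>
      Int.modEq_div_gcd_of_dvd_add_mul hd (mem_filter.1 hx).2 (mem_filter.1 hy).2
  calc #{b ∈ range m | (d : ℤ) ∣ c + n * (b : ℕ)} * d ≤ m / k * d := Nat.mul_le_mul_right d hcard
    _ = m * (d / k) := (Nat.div_mul_right_comm (hkd.trans hdm) d).trans
        (Nat.mul_div_assoc m hkd)
    _ = Int.gcd d n * m := by rw [Nat.div_div_self hgd hd.ne', mul_comm]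

theorem sum_gcd_add_mul_le (c n : ℤ) (hn : n ≠ 0) (m : ℕ) :
    ∑ b ∈ range m, Int.gcd (c + n * b) m ≤ n.natAbs * m * m.divisors.card := by
  set f : ℕ → ℕ := fun b => Int.gcd (c + n * b) m
  have hmaps : ∀ b ∈ range m, f b ∈ m.divisors := fun b hb =>
    Nat.mem_divisors.2 ⟨Int.natCast_dvd_natCast.1 (Int.gcd_dvd_right _ _),
      fun h => by simp [h] at hb⟩
  have hfiber : ∀ d ∈ m.divisors, ∑ b ∈ range m with f b = d, f b ≤ n.natAbs * m := by
    intro d hd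
    have hdm := Nat.dvd_of_mem_divisors hd
    have hd0 := Nat.pos_of_mem_divisors hd
    calc ∑ b ∈ range m with f b = d, f b = #{b ∈ range m | f b = d} * d := by
          rw [sum_congr rfl fun b hb => (mem_filter.1 hb).2, sum_const, smul_eq_mul]
      _ ≤ #{b ∈ range m | (d : ℤ) ∣ c + n * (b : ℕ)} * d := by
          refine Nat.mul_le_mul_right d (card_le_card (monotone_filter_right _ ?_))
          intro b _ hb
          exact hb ▸ Int.gcd_dvd_left _ _
      _ ≤ Int.gcd d n * m := card_filter_dvd_add_mul_mul_le_gcd_mul hdm hd0 c n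
      _ ≤ n.natAbs * m :=
          Nat.mul_le_mul_right m (Nat.le_of_dvd (Int.natAbs_pos.2 hn) (Int.gcd_dvd_natAbs_right _ _))
  calc ∑ b ∈ range m, f b = ∑ d ∈ m.divisors, ∑ b ∈ range m with f b = d, f b :=
        (sum_fiberwise_of_maps_to hmaps f).symm
    _ ≤ ∑ _d ∈ m.divisors, n.natAbs * m := sum_le_sum hfiber
    _ = n.natAbs * m * m.divisors.card := by rw [sum_const, smul_eq_mul, mul_comm]

theorem stmt10_general (q a : ℕ) (n1 n2 : ℤ) (hn2 : n2 ≠ 0) :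
    ∑ b ∈ Finset.range (q / a), Int.gcd (n1 * a + n2 * b) ((q / a : ℕ) : ℤ)
      ≤ n2.natAbs * (q / a) * (q / a).divisors.card :=
  sum_gcd_add_mul_le (n1 * a) n2 hn2 (q / a)

theorem stmt10 (q a : ℕ) (hq : 0 < q) (ha : a ∣ q) (n1 n2 : ℤ) (hn2 : n2 ≠ 0) :
    ∑ b ∈ Finset.range (q / a), Int.gcd (n1 * a + n2 * b) ((q / a : ℕ) : ℤ)
      ≤ n2.natAbs * (q / a) * (q / a).divisors.card :=
  stmt10_general q a n1 n2 hn2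
end

section
/- Let q be a positive integer with gcd-split q = q0·q1, gcd(q0,q1)=1, and q0ℓ0 + q1ℓ1 = 1. Suppose a | q0 and integers t1, t2, p1, p2 satisfy t1·p1 ≡ a (mod q), t2·p1 ≡ 0 (mod q), t1·p2 ≡ b (mod q), t2·p2 ≡ q/a (mod q), with gcd(p1,p2,q)=1, where y1 ≡ p1 (mod q0). Then gcd(q0, y1) = a. -/
/-!
From `t₂ p₁ ≡ 0` and `t₂ p₂ ≡ q/a (mod q)` one gets `(q/a) p₁ ≡ p₂ t₂ p₁ ≡ 0 (mod q)`, so `a ∣ p₁`.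
Since `a ∣ q₀` and `y₁ ≡ p₁ (mod q₀)`, we have `gcd(q₀, y₁) = gcd(q₀, p₁)`, which is divisible by `a`;
conversely it divides `q` and `p₁`, hence `t₁ p₁ - (t₁ p₁ - a) = a`.
-/

theorem Int.ModEq.gcd_eq {n y p : ℤ} (h : y ≡ p [ZMOD n]) : Int.gcd n y = Int.gcd n p := by
  rw [Int.gcd_comm, ← Int.gcd_emod, h, Int.gcd_emod, Int.gcd_comm]

theorem Int.dvd_of_mul_modEq_zero_of_mul_modEq {a c t p p' : ℤ} (hc : c ≠ 0)
    (h₀ : t * p ≡ 0 [ZMOD a * c]) (h₁ : t * p' ≡ c [ZMOD a * c]) : a ∣ p := by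
  have hcp : c * p ≡ 0 [ZMOD a * c] :=
    calc c * p ≡ t * p' * p [ZMOD a * c] := (h₁.mul_right p).symm
      _ = p' * (t * p) := by ring
      _ ≡ p' * 0 [ZMOD a * c] := h₀.mul_left p'
      _ = 0 := mul_zero p'
  rw [Int.modEq_zero_iff_dvd, mul_comm a c] at hcp
  exact (mul_dvd_mul_iff_left hc).mp hcp

theorem Int.gcd_eq_of_dvd_of_mul_modEq {n q p t : ℤ} {a : ℕ} (hnq : n ∣ q) (han : (a : ℤ) ∣ n)
    (hap : (a : ℤ) ∣ p) (h : t * p ≡ a [ZMOD q]) : Int.gcd n p = a := by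
  refine Nat.dvd_antisymm ?_ (Int.dvd_gcd han hap)
  have hgq : (Int.gcd n p : ℤ) ∣ q := (Int.gcd_dvd_left n p).trans hnq
  have hga : (Int.gcd n p : ℤ) ∣ a := by
    rw [← sub_add_cancel (a : ℤ) (t * p)]
    exact dvd_add (hgq.trans h.dvd) ((Int.gcd_dvd_right n p).mul_left t)
  exact Int.natCast_dvd_natCast.mp hga

theorem stmt15_general (q q0 q1 a : ℕ) (hq0 : 0 < q0) (hq1 : 0 < q1)
    (hq : q = q0 * q1)
    (ha : a ∣ q0) (hapos : 0 < a)
    (t1 t2 p1 p2 y1 : ℤ)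
    (h1 : t1 * p1 ≡ (a : ℤ) [ZMOD (q : ℤ)])
    (h2 : t2 * p1 ≡ 0 [ZMOD (q : ℤ)])
    (h4 : t2 * p2 ≡ ((q / a : ℕ) : ℤ) [ZMOD (q : ℤ)])
    (hy1 : y1 ≡ p1 [ZMOD (q0 : ℤ)]) :
    Int.gcd (q0 : ℤ) y1 = a := by
  have haq : a ∣ q := hq ▸ ha.mul_right q1
  have hq_eq : (q : ℤ) = a * ((q / a : ℕ) : ℤ) := by
    rw [← Nat.cast_mul, Nat.mul_div_cancel' haq]
  have hqa : ((q / a : ℕ) : ℤ) ≠ 0 := by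
    have hqpos : 0 < q := hq ▸ Nat.mul_pos hq0 hq1
    exact_mod_cast (Nat.div_pos (Nat.le_of_dvd hqpos haq) hapos).ne'
  rw [hq_eq] at h2 h4
  have hap1 : (a : ℤ) ∣ p1 := Int.dvd_of_mul_modEq_zero_of_mul_modEq hqa h2 h4
  have hq0q : (q0 : ℤ) ∣ q := Int.natCast_dvd_natCast.mpr (hq ▸ dvd_mul_right q0 q1)
  rw [hy1.gcd_eq]
  exact Int.gcd_eq_of_dvd_of_mul_modEq hq0q (Int.natCast_dvd_natCast.mpr ha) hap1 h1

theorem stmt15 (q q0 q1 a : ℕ) (hq0 : 0 < q0) (hq1 : 0 < q1)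
    (hq : q = q0 * q1) (hcop : Nat.Coprime q0 q1)
    (ℓ0 ℓ1 : ℤ) (hbezout : (q0 : ℤ) * ℓ0 + (q1 : ℤ) * ℓ1 = 1)
    (ha : a ∣ q0) (hapos : 0 < a)
    (hrad : ∀ p : ℕ, p.Prime → p ∣ q0 → p ∣ a)
    (t1 t2 p1 p2 b y1 : ℤ)
    (h1 : t1 * p1 ≡ (a : ℤ) [ZMOD (q : ℤ)])
    (h2 : t2 * p1 ≡ 0 [ZMOD (q : ℤ)])
    (h3 : t1 * p2 ≡ b [ZMOD (q : ℤ)])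
    (h4 : t2 * p2 ≡ ((q / a : ℕ) : ℤ) [ZMOD (q : ℤ)])
    (hgcd : Int.gcd (Int.gcd p1 p2) (q : ℤ) = 1)
    (hy1 : y1 ≡ p1 [ZMOD (q0 : ℤ)]) :
    Int.gcd (q0 : ℤ) y1 = a :=
  stmt15_general q q0 q1 a hq0 hq1 hq ha hapos t1 t2 p1 p2 y1 h1 h2 h4 hy1
end

section
/- Let q be a positive integer written as q = q0·q1 with gcd(q0, q1) = 1, and let a | q0 with every prime factor of q0 dividing a. For integers n1, n2, b, c, m, d and ℓ0, ℓ1 with q0ℓ0 + q1ℓ1 = 1 and gcd(b·ℓ1, q0/a) = 1, the product of Kloosterman sums satisfies |S((n1 a + n2 b)ℓ0, c m ℓ0; q1) · S((n1 b̄ a + n2)ℓ1, (c b ℓ1 + d·q0/a)m; q0)| ≤ σ₀(q)·√(q·a)·√(gcd(c·m, q/a)), where S(n, m; r) = Σ_{α mod r, gcd(α,r)=1} e(nα/r + m ᾱ/r) and b̄ is an inverse of b mod q0/a. -/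
open Real

/-- Kloosterman sum `S(n,m;r) = ∑_{α mod r, gcd(α,r)=1} e((nα + mᾱ)/r)`,
where `ᾱ` is the inverse of `α` modulo `r`. -/
noncomputable def kloosterman (r : ℕ) (n m : ℤ) : ℂ :=
  ∑ α ∈ (Finset.range r).filter (fun α => Nat.Coprime α r),
    eChar (((n * (α : ℤ) + m * ((((α : ZMod r)⁻¹).val : ℕ) : ℤ) : ℤ) : ℝ) / r)

/-!
Both Kloosterman sums are bounded by Weil's bound. Since `ℓ0` is a unit modulo `q1`, the gcd
attached to the first sum divides `gcd(cm, q1)`. Writing `q0 = a Q`, the one attached to the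
second sum divides `a · gcd(M, Q)` for its second argument `M`, and `M ≡ bℓ1 · cm (mod Q)` with
`bℓ1` a unit modulo `Q`, so `gcd(M, Q) = gcd(cm, Q)`. As `q1` and `Q` are coprime, the product of
the two gcds divides `a · gcd(cm, q1 Q) = a · gcd(cm, q/a)`.
-/

theorem Int.gcd_mul_left_cancel_of_gcd_eq_one {u r : ℤ} (x : ℤ) (h : Int.gcd u r = 1) :
    Int.gcd (u * x) r = Int.gcd x r := by
  simp only [Int.gcd, Int.natAbs_mul]
  exact Nat.Coprime.gcd_mul_left_cancel _ h

theorem Int.gcd_natCast_mul_of_coprime (x : ℤ) {m n : ℕ} (h : m.Coprime n) :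
    Int.gcd x ((m * n : ℕ) : ℤ) = Int.gcd x m * Int.gcd x n := by
  simp only [Int.gcd, Int.natAbs_natCast]
  exact h.gcd_mul _

theorem Int.gcd_natCast_mul_dvd_mul_gcd (x : ℤ) (a Q : ℕ) :
    Int.gcd x ((a * Q : ℕ) : ℤ) ∣ a * Int.gcd x Q := by
  have h := Int.gcd_dvd_gcd_mul_left_left x ((a * Q : ℕ) : ℤ) a
  rwa [Nat.cast_mul, Int.gcd_mul_left, Int.natAbs_natCast] at h

theorem Int.gcd_gcd_dvd_gcd_right (n m r : ℤ) : Int.gcd (Int.gcd n m) r ∣ Int.gcd m r :=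
  Int.gcd_dvd_gcd_of_dvd_left r (Int.gcd_dvd_right n m)

theorem Int.gcd_gcd_mul_right_dvd_of_gcd_eq_one {ℓ r : ℤ} (n x : ℤ) (hℓ : Int.gcd ℓ r = 1) :
    Int.gcd (Int.gcd n (x * ℓ)) r ∣ Int.gcd x r := by
  refine (Int.gcd_gcd_dvd_gcd_right n (x * ℓ) r).trans (dvd_of_eq ?_)
  rw [mul_comm, Int.gcd_mul_left_cancel_of_gcd_eq_one x hℓ]

theorem Int.gcd_gcd_add_mul_dvd_mul_gcd {u : ℤ} {a Q : ℕ} (n x y d m : ℤ)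
    (hu : Int.gcd (u * y) Q = 1) :
    Int.gcd (Int.gcd n ((x * u * y + d * Q) * m)) ((a * Q : ℕ) : ℤ) ∣ a * Int.gcd (x * m) Q := by
  have hmod : (x * u * y + d * Q) * m = u * y * (x * m) + Q * (d * m) := by ring
  refine ((Int.gcd_gcd_dvd_gcd_right n _ _).trans (Int.gcd_natCast_mul_dvd_mul_gcd _ a Q)).trans
    (dvd_of_eq ?_)
  rw [hmod, Int.gcd_add_mul_left_left, Int.gcd_mul_left_cancel_of_gcd_eq_one _ hu]

theorem norm_mul_le_of_weil_bounds {x y : ℂ} {r s g h : ℕ} (hrs : r.Coprime s)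
    (hx : ‖x‖ ≤ (s.divisors.card : ℝ) * √s * √g) (hy : ‖y‖ ≤ (r.divisors.card : ℝ) * √r * √h) :
    ‖x * y‖ ≤ ((r * s).divisors.card : ℝ) * √(r * s : ℕ) * √(g * h : ℕ) := by
  calc ‖x * y‖ = ‖x‖ * ‖y‖ := norm_mul x y
    _ ≤ ((s.divisors.card : ℝ) * √s * √g) * ((r.divisors.card : ℝ) * √r * √h) :=
      mul_le_mul hx hy (norm_nonneg y) (by positivity)
    _ = ((r * s).divisors.card : ℝ) * √(r * s : ℕ) * √(g * h : ℕ) := by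
      rw [hrs.card_divisors_mul]
      push_cast
      rw [sqrt_mul (Nat.cast_nonneg r), sqrt_mul (Nat.cast_nonneg g)]
      ring

theorem stmt19_general (q q0 q1 a : ℕ) (hq0 : 0 < q0) (hq1 : 0 < q1)
    (hq : q = q0 * q1) (hcop : Nat.Coprime q0 q1)
    (ha : a ∣ q0)
    (ℓ0 ℓ1 : ℤ)
    (n1 n2 b c m d bbar : ℤ)
    (hb : Int.gcd (b * ℓ1) ((q0 / a : ℕ) : ℤ) = 1)
    (hl0 : Int.gcd ℓ0 (q1 : ℤ) = 1)
    (hWeil : ∀ (n m : ℤ) (r : ℕ), 0 < r →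
      ‖kloosterman r n m‖ ≤
        (r.divisors.card : ℝ) * Real.sqrt r * Real.sqrt (Int.gcd (Int.gcd n m) (r : ℤ))) :
    ‖(kloosterman q1 ((n1 * a + n2 * b) * ℓ0) (c * m * ℓ0) *
          kloosterman q0 ((n1 * bbar * a + n2) * ℓ1) ((c * b * ℓ1 + d * ((q0 / a : ℕ) : ℤ)) * m))‖
      ≤ (q.divisors.card : ℝ) * Real.sqrt ((q : ℝ) * a) *
          Real.sqrt (Int.gcd (c * m) ((q / a : ℕ) : ℤ)) := by
  set Q := q0 / a
  have hapos : 0 < a := Nat.pos_of_dvd_of_pos ha hq0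
  have hq0Q : q0 = a * Q := (Nat.mul_div_cancel' ha).symm
  have hqa : q / a = q1 * Q := by
    rw [hq, hq0Q, mul_right_comm, mul_assoc, Nat.mul_div_cancel_left _ hapos]
  have hQq1 : Nat.Coprime q1 Q := (hcop.coprime_dvd_left (Nat.div_dvd_of_dvd ha)).symm
  set G := Int.gcd (c * m) ((q / a : ℕ) : ℤ)
  have hdvd := mul_dvd_mul
    (Int.gcd_gcd_mul_right_dvd_of_gcd_eq_one ((n1 * a + n2 * b) * ℓ0) (c * m) hl0)
    (Int.gcd_gcd_add_mul_dvd_mul_gcd (a := a) ((n1 * bbar * a + n2) * ℓ1) c ℓ1 d m hb)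
  rw [mul_left_comm, ← Int.gcd_natCast_mul_of_coprime _ hQq1, ← hqa, ← hq0Q] at hdvd
  have hGpos : 0 < a * G := Nat.mul_pos hapos <| Int.gcd_pos_of_ne_zero_right _ <| by
    rw [hqa, Nat.cast_ne_zero]
    exact (Nat.mul_pos hq1 (Nat.div_pos (Nat.le_of_dvd hq0 ha) hapos)).ne'
  calc _ ≤ (q.divisors.card : ℝ) * √q * √(_ : ℕ) := hq ▸
        norm_mul_le_of_weil_bounds hcop (hWeil _ _ q1 hq1) (hWeil _ _ q0 hq0)
    _ ≤ (q.divisors.card : ℝ) * √q * √(a * G : ℕ) :=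
      mul_le_mul_of_nonneg_left (sqrt_le_sqrt (Nat.cast_le.mpr (Nat.le_of_dvd hGpos hdvd)))
        (mul_nonneg (Nat.cast_nonneg _) (sqrt_nonneg _))
    _ = _ := by
      rw [Nat.cast_mul, sqrt_mul (Nat.cast_nonneg q), sqrt_mul (Nat.cast_nonneg a)]
      ring

theorem stmt19 (q q0 q1 a : ℕ) (hq0 : 0 < q0) (hq1 : 0 < q1)
    (hq : q = q0 * q1) (hcop : Nat.Coprime q0 q1)
    (ha : a ∣ q0) (hapos : 0 < a)
    (hrad : ∀ p : ℕ, p.Prime → p ∣ q0 → p ∣ a)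
    (ℓ0 ℓ1 : ℤ) (hbezout : (q0 : ℤ) * ℓ0 + (q1 : ℤ) * ℓ1 = 1)
    (n1 n2 b c m d bbar : ℤ)
    (hb : Int.gcd (b * ℓ1) ((q0 / a : ℕ) : ℤ) = 1)
    (hbbar : b * bbar ≡ 1 [ZMOD ((q0 / a : ℕ) : ℤ)])
    (hl0 : Int.gcd ℓ0 (q1 : ℤ) = 1)
    (hq1q0a : Int.gcd (q1 : ℤ) ((q0 / a : ℕ) : ℤ) = 1)
    (hWeil : ∀ (n m : ℤ) (r : ℕ), 0 < r →
      ‖kloosterman r n m‖ ≤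
        (r.divisors.card : ℝ) * Real.sqrt r * Real.sqrt (Int.gcd (Int.gcd n m) (r : ℤ))) :
    ‖(kloosterman q1 ((n1 * a + n2 * b) * ℓ0) (c * m * ℓ0) *
          kloosterman q0 ((n1 * bbar * a + n2) * ℓ1) ((c * b * ℓ1 + d * ((q0 / a : ℕ) : ℤ)) * m))‖
      ≤ (q.divisors.card : ℝ) * Real.sqrt ((q : ℝ) * a) *
          Real.sqrt (Int.gcd (c * m) ((q / a : ℕ) : ℤ)) :=
  stmt19_general q q0 q1 a hq0 hq1 hq hcop ha ℓ0 ℓ1 n1 n2 b c m d bbar hb hl0 hWeil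
end
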